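/- arXiv:2103.12444 — 2 statements merged into one kernel-verified Lean document; each statement's English description precedes it below -/
import Mathlib

section
/- For all relaxation orders d ≥ d_min, all sparse orders k ≥ 1, and all j ∈ {0,1,…,m}, the term-sparsity graph G^(k)_{d,j} constructed at relaxation order d is a subgraph of the term-sparsity graph G^(k)_{d+1,j} constructed at relaxation order d+1 (i.e., every edge of G^(k)_{d,j} is an edge of G^(k)_{d+1,j}). -/
open scoped BigOperators ComplexOrder

attribute [local instance] Classical.propDecidable

noncomputable section

/-- Exponent tuples `ℕ^n`. -/
abbrev Exp (n : ℕ) := Fin n → ℕ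

/-- A complex polynomial in `z, z̄` that is real-valued (Hermitian), represented by its
coefficients `f_{β,γ}` (of the monomial `z^β z̄^γ`). -/
structure CPoly (n : ℕ) where
  coeff : Exp n × Exp n → ℂ
  finite_support : (Function.support coeff).Finite
  herm : ∀ p : Exp n × Exp n, coeff (p.2, p.1) = star (coeff p)

namespace CPoly

variable {n : ℕ}

/-- The support of a polynomial. -/
def supp (f : CPoly n) : Set (Exp n × Exp n) := Function.support f.coeff

/-- The (total) degree of a polynomial. -/
def deg (f : CPoly n) : ℕ :=
  sSup ((fun p : Exp n × Exp n => (∑ i, p.1 i) + ∑ i, p.2 i) '' f.supp)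

/-- `⌈deg f / 2⌉`. -/
def halfDeg (f : CPoly n) : ℕ := (f.deg + 1) / 2

/-- The constant polynomial `1`. -/
def one (n : ℕ) : CPoly n where
  coeff := fun p => if p = (0, 0) then 1 else 0
  finite_support := by
    apply Set.Finite.subset (Set.finite_singleton ((0, 0) : Exp n × Exp n))
    intro p hp
    by_contra hne
    simp only [Function.mem_support] at hp
    rw [if_neg (by simpa using hne)] at hp
    exact hp rfl
  herm := by
    rintro ⟨a, b⟩
    have hiff : (((b, a) : Exp n × Exp n) = (0, 0)) ↔ (((a, b) : Exp n × Exp n) = (0, 0)) := by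
      constructor <;> · intro h; rw [Prod.ext_iff] at h ⊢; exact ⟨h.2, h.1⟩
    show (if ((b, a) : Exp n × Exp n) = (0, 0) then (1 : ℂ) else 0)
      = star (if ((a, b) : Exp n × Exp n) = (0, 0) then (1 : ℂ) else 0)
    by_cases h : ((a, b) : Exp n × Exp n) = (0, 0)
    · rw [if_pos (hiff.mpr h), if_pos h]; simp
    · rw [if_neg (fun hc => h (hiff.mp hc)), if_neg h]; simp

end CPoly

/-- Hermitian (pseudo-)moment sequences: `y_{β,γ} = conj (y_{γ,β})`. -/
def IsHermSeq {n : ℕ} (y : Exp n × Exp n → ℂ) : Prop :=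
  ∀ p : Exp n × Exp n, y (p.2, p.1) = star (y p)

/-- The Riesz linear functional `L^c_y(f) = Σ f_{β,γ} y_{β,γ}`. -/
def Lc {n : ℕ} (f : CPoly n) (y : Exp n × Exp n → ℂ) : ℂ :=
  ∑ᶠ p : Exp n × Exp n, f.coeff p * y p

/-- The set `ℕ^n_d` of exponents of degree at most `d`. -/
def degSet (n d : ℕ) : Set (Exp n) := {β | ∑ i, β i ≤ d}

/-- Exponents of degree at most `d` supported on a subset `S` of variables. -/
def degSetI {n : ℕ} (d : ℕ) (S : Set (Fin n)) : Set (Exp n) :=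
  {β | (∑ i, β i ≤ d) ∧ ∀ i, β i ≠ 0 → i ∈ S}

lemma degSetI_finite {n : ℕ} (d : ℕ) (S : Set (Fin n)) : (degSetI d S).Finite := by
  apply Set.Finite.subset (Set.Finite.pi (t := fun _ : Fin n => Set.Iic d)
    (fun _ => Set.finite_Iic d))
  intro β hβ
  simp only [Set.mem_pi, Set.mem_univ, Set.mem_Iic, forall_true_left]
  intro i
  calc β i ≤ ∑ j, β j := Finset.single_le_sum (fun j _ => Nat.zero_le _) (Finset.mem_univ i)
    _ ≤ d := hβ.1

/-- The (finite) index type of a moment/localizing matrix: monomials `β ∈ ℕ^n_d`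
supported on the variable set `S`. -/
def MIdx (n d : ℕ) (S : Set (Fin n)) : Type := ↥(degSetI (n := n) d S)

noncomputable instance {n d : ℕ} {S : Set (Fin n)} : Fintype (MIdx n d S) :=
  (degSetI_finite d S).fintype

instance {n d : ℕ} {S : Set (Fin n)} : DecidableEq (MIdx n d S) :=
  fun a b => Classical.propDecidable _

/-- The complex moment (sub)matrix `M^c_d(y, S)`. -/
def momMat {n : ℕ} (d : ℕ) (S : Set (Fin n)) (y : Exp n × Exp n → ℂ) :
    Matrix (MIdx n d S) (MIdx n d S) ℂ :=
  fun β γ => y (β.1, γ.1)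

/-- The complex localizing (sub)matrix `M^c_d(g y, S)`. -/
def locMat {n : ℕ} (g : CPoly n) (d : ℕ) (S : Set (Fin n)) (y : Exp n × Exp n → ℂ) :
    Matrix (MIdx n d S) (MIdx n d S) ℂ :=
  fun β γ => ∑ᶠ p : Exp n × Exp n, g.coeff p * y (β.1 + p.1, γ.1 + p.2)

/-- The minimum relaxation order `d_min = max{⌈deg f/2⌉, d_1, …, d_m}`. -/
def dminOrd {n m : ℕ} (f : CPoly n) (g : Fin m → CPoly n) : ℕ :=
  max f.halfDeg (Finset.univ.sup fun j => (g j).halfDeg)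

/-- Feasible set of the dense complex moment relaxation `(Q_d)`. -/
def denseFeas {n m : ℕ} (f : CPoly n) (g : Fin m → CPoly n) (d : ℕ) :
    Set (Exp n × Exp n → ℂ) :=
  {y | IsHermSeq y ∧ y (0, 0) = 1 ∧ (momMat d Set.univ y).PosSemidef ∧
    ∀ j : Fin m, (locMat (g j) (d - (g j).halfDeg) Set.univ y).PosSemidef}

/-- `ρ_d`, the optimum of the dense relaxation `(Q_d)` (as an extended real). -/
def denseOpt {n m : ℕ} (f : CPoly n) (g : Fin m → CPoly n) (d : ℕ) : EReal :=
  sInf ((fun y => ((Lc f y).re : EReal)) '' denseFeas f g d)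

/- ### Graphs, chordality, sparsity machinery -/

/-- A graph is chordal if every cycle of length at least four has a chord, i.e. an edge of the
graph joining two vertices of the cycle which is not an edge of the cycle. -/
def IsChordal {V : Type*} (G : SimpleGraph V) : Prop :=
  ∀ ⦃v : V⦄ (w : G.Walk v v), w.IsCycle → 4 ≤ w.length →
    ∃ a b, a ∈ w.support ∧ b ∈ w.support ∧ G.Adj a b ∧ s(a, b) ∉ w.edges

/-- The maximal chordal extension: complete every connected component. -/
def maxChordalExt {V : Type*} (G : SimpleGraph V) : SimpleGraph V :=
  SimpleGraph.fromRel fun a b => G.Reachable a b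

/-- The adjacency matrix `B_G` (restricted to the monomial index set `MIdx n d S`),
with ones on the diagonal. -/
def adjB {n : ℕ} (d : ℕ) (S : Set (Fin n)) (G : SimpleGraph (Exp n)) :
    Matrix (MIdx n d S) (MIdx n d S) ℂ :=
  fun β γ => if β = γ ∨ G.Adj β.1 γ.1 then 1 else 0

/-- Membership in `Π_G(H_+)`: the matrix `M` coincides, on the diagonal and on the edges of
`G`, with some Hermitian positive semidefinite matrix (i.e. `M = Π_G(Q)` for PSD `Q`,
assuming `M` vanishes outside the pattern). -/
def inProjPSD {n : ℕ} (d : ℕ) (S : Set (Fin n)) (G : SimpleGraph (Exp n))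
    (M : Matrix (MIdx n d S) (MIdx n d S) ℂ) : Prop :=
  ∃ Q : Matrix (MIdx n d S) (MIdx n d S) ℂ, Q.PosSemidef ∧
    (fun β γ : MIdx n d S => if β = γ ∨ G.Adj β.1 γ.1 then Q β γ else 0) = M

/-- The `g`-support of a graph `G` with node set `V`:
`supp_g(G) = {(β+β', γ+γ') : β = γ ∈ V or {β,γ} ∈ E(G), (β',γ') ∈ supp(g)}`. -/
def gSupp {n : ℕ} (g : CPoly n) (V : Set (Exp n)) (G : SimpleGraph (Exp n)) :
    Set (Exp n × Exp n) :=
  {q | ∃ β γ p, ((β = γ ∧ β ∈ V) ∨ G.Adj β γ) ∧ p ∈ g.supp ∧ q = (β + p.1, γ + p.2)}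

/-- The global support set `𝒜 = supp(f) ∪ ⋃_j supp(g_j)`. -/
def suppA {n m : ℕ} (f : CPoly n) (g : Fin m → CPoly n) : Set (Exp n × Exp n) :=
  f.supp ∪ ⋃ j : Fin m, (g j).supp

/-- The term sparsity pattern graph on the node set `V` with edges `{β,γ}` for `(β,γ) ∈ A`. -/
def tspGraph {n : ℕ} (A : Set (Exp n × Exp n)) (V : Set (Exp n)) : SimpleGraph (Exp n) :=
  SimpleGraph.fromRel fun β γ => β ∈ V ∧ γ ∈ V ∧ (β, γ) ∈ A

/-- One step of the term sparsity iteration: the graph `F` on node set `V` with edges `{β,γ}`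
such that `((β,γ)+supp(g)) ∩ C ≠ ∅`. -/
def Fstep {n : ℕ} (g : CPoly n) (V : Set (Exp n)) (C : Set (Exp n × Exp n)) :
    SimpleGraph (Exp n) :=
  SimpleGraph.fromRel fun β γ => β ∈ V ∧ γ ∈ V ∧ ∃ p ∈ g.supp, (β + p.1, γ + p.2) ∈ C

/-- `g_0 = 1, g_1, …, g_m`. -/
def gext {n m : ℕ} (g : Fin m → CPoly n) : Fin (m + 1) → CPoly n :=
  Fin.cases (CPoly.one n) g

/-- `d_0 = 0, d_1, …, d_m`. -/
def dje {n m : ℕ} (g : Fin m → CPoly n) : Fin (m + 1) → ℕ :=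
  Fin.cases 0 fun j => (g j).halfDeg

/-- `⋃_{i=0}^m supp_{g_i}(G_i)` for a family of graphs. -/
def tsC {n m : ℕ} (g : Fin m → CPoly n) (d : ℕ)
    (GG : Fin (m + 1) → SimpleGraph (Exp n)) : Set (Exp n × Exp n) :=
  ⋃ i : Fin (m + 1), gSupp (gext g i) (degSet n (d - dje g i)) (GG i)

/-- The family of term sparsity graphs `G^(k)_{d,j}`, built with the chordal extension
operator `CE` (taking the node set and the graph to be extended). -/
def tsFam {n m : ℕ} (f : CPoly n) (g : Fin m → CPoly n)
    (CE : Set (Exp n) → SimpleGraph (Exp n) → SimpleGraph (Exp n)) (d : ℕ) :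
    ℕ → Fin (m + 1) → SimpleGraph (Exp n)
  | 0, j => if j = 0 then tspGraph (suppA f g) (degSet n d) else ⊥
  | k + 1, j =>
      CE (degSet n (d - dje g j))
        (Fstep (gext g j) (degSet n (d - dje g j)) (tsC g d (tsFam f g CE d k)))

/-- Feasible set of the TSSOS relaxation `(Q^ts_{d,k})`. -/
def tsFeas {n m : ℕ} (f : CPoly n) (g : Fin m → CPoly n)
    (CE : Set (Exp n) → SimpleGraph (Exp n) → SimpleGraph (Exp n)) (d k : ℕ) :
    Set (Exp n × Exp n → ℂ) :=
  {y | IsHermSeq y ∧ y (0, 0) = 1 ∧ ∀ j : Fin (m + 1),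
    inProjPSD (d - dje g j) Set.univ (tsFam f g CE d k j)
      (Matrix.hadamard (adjB (d - dje g j) Set.univ (tsFam f g CE d k j))
        (locMat (gext g j) (d - dje g j) Set.univ y))}

/-- `ρ^ts_{d,k}`, the optimum of `(Q^ts_{d,k})`. -/
def tsOpt {n m : ℕ} (f : CPoly n) (g : Fin m → CPoly n)
    (CE : Set (Exp n) → SimpleGraph (Exp n) → SimpleGraph (Exp n)) (d k : ℕ) : EReal :=
  sInf ((fun y => ((Lc f y).re : EReal)) '' tsFeas f g CE d k)

/- ### Sign symmetries -/

/-- The sign symmetries of a set `A ⊆ ℕ^n × ℕ^n`: binary vectors `r ∈ Z_2^n` with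
`rᵀ(β+γ) ≡ 0 (mod 2)` for all `(β,γ) ∈ A`. -/
def signSyms {n : ℕ} (A : Set (Exp n × Exp n)) : Set (Fin n → ZMod 2) :=
  {r | ∀ p ∈ A, ∑ i, r i * ((p.1 i + p.2 i : ℕ) : ZMod 2) = 0}

/- ### Correlative sparsity machinery -/

/-- The variables occurring in a polynomial: `⋃_{(β,γ) ∈ supp g} (supp β ∪ supp γ)`. -/
def varsOf {n : ℕ} (g : CPoly n) : Set (Fin n) :=
  {i | ∃ p ∈ g.supp, p.1 i ≠ 0 ∨ p.2 i ≠ 0}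

/-- The correlative sparsity pattern graph `G^csp` (at relaxation order `d`, with
`J' = {j : d_j = d}`). -/
def cspGraph {n m : ℕ} (f : CPoly n) (g : Fin m → CPoly n) (d : ℕ) : SimpleGraph (Fin n) :=
  SimpleGraph.fromRel fun i i' =>
    (∃ p, (p ∈ f.supp ∨ ∃ j : Fin m, (g j).halfDeg = d ∧ p ∈ (g j).supp) ∧
      (p.1 i ≠ 0 ∨ p.2 i ≠ 0) ∧ (p.1 i' ≠ 0 ∨ p.2 i' ≠ 0)) ∨
    (∃ k : Fin m, (g k).halfDeg ≠ d ∧ i ∈ varsOf (g k) ∧ i' ∈ varsOf (g k))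

/-- `s` is a maximal clique of `G`. -/
def IsMaxClique {V : Type*} (G : SimpleGraph V) (s : Set V) : Prop :=
  G.IsClique s ∧ ∀ t : Set V, G.IsClique t → s ⊆ t → s = t

/-- Feasible set of the correlative sparsity relaxation `(Q^cs_d)` with variable cliques
`I_1, …, I_p`, constraint groups `J_1, …, J_p` and scalarized constraints `J'`. -/
def csFeas {n m p : ℕ} (g : Fin m → CPoly n) (d : ℕ) (I : Fin p → Set (Fin n))
    (J : Fin p → Finset (Fin m)) (J' : Finset (Fin m)) : Set (Exp n × Exp n → ℂ) :=
  {y | IsHermSeq y ∧ y (0, 0) = 1 ∧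
    (∀ l : Fin p, (momMat d (I l) y).PosSemidef) ∧
    (∀ l : Fin p, ∀ j ∈ J l, (locMat (g j) (d - (g j).halfDeg) (I l) y).PosSemidef) ∧
    (∀ j ∈ J', 0 ≤ (Lc (g j) y).re)}

/-- `ρ^cs_d`, the optimum of `(Q^cs_d)`. -/
def csOpt {n m p : ℕ} (f : CPoly n) (g : Fin m → CPoly n) (d : ℕ) (I : Fin p → Set (Fin n))
    (J : Fin p → Finset (Fin m)) (J' : Finset (Fin m)) : EReal :=
  sInf ((fun y => ((Lc f y).re : EReal)) '' csFeas g d I J J')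

/- ### Combined correlative-term sparsity machinery -/

/-- `𝒜_l`: the elements of `A` supported on the variable clique `I_l`. -/
def AlocSet {n : ℕ} (A : Set (Exp n × Exp n)) (I : Set (Fin n)) : Set (Exp n × Exp n) :=
  {q ∈ A | (∀ i, q.1 i ≠ 0 → i ∈ I) ∧ ∀ i, q.2 i ≠ 0 → i ∈ I}

/-- `{0} ∪ J_l` inside `Fin (m+1)`. -/
def Jext {m : ℕ} (Jl : Finset (Fin m)) : Set (Fin (m + 1)) :=
  insert 0 (Fin.succ '' (Jl : Set (Fin m)))

/-- `𝒞^(k)_d = ⋃_l ⋃_{j ∈ {0} ∪ J_l} supp_{g_j}(G^(k)_{d,l,j})`. -/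
def cstsC {n m p : ℕ} (g : Fin m → CPoly n) (d : ℕ) (I : Fin p → Set (Fin n))
    (J : Fin p → Finset (Fin m)) (GG : Fin p → Fin (m + 1) → SimpleGraph (Exp n)) :
    Set (Exp n × Exp n) :=
  ⋃ l : Fin p, ⋃ j ∈ Jext (J l),
    gSupp (gext g j) (degSetI (d - dje g j) (I l)) (GG l j)

/-- The family of correlative-term sparsity graphs `G^(k)_{d,l,j}`, built with the chordal
extension operator `CE`. -/
def cstsFam {n m p : ℕ} (f : CPoly n) (g : Fin m → CPoly n)
    (CE : Set (Exp n) → SimpleGraph (Exp n) → SimpleGraph (Exp n))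
    (I : Fin p → Set (Fin n)) (J : Fin p → Finset (Fin m)) (d : ℕ) :
    ℕ → Fin p → Fin (m + 1) → SimpleGraph (Exp n)
  | 0, l, j => if j = 0 then tspGraph (AlocSet (suppA f g) (I l)) (degSetI d (I l)) else ⊥
  | k + 1, l, j =>
      CE (degSetI (d - dje g j) (I l))
        (Fstep (gext g j) (degSetI (d - dje g j) (I l))
          (cstsC g d I J (cstsFam f g CE I J d k)))

/-- Feasible set of the CS-TSSOS relaxation `(Q^cs-ts_{d,k})`. -/
def cstsFeas {n m p : ℕ} (f : CPoly n) (g : Fin m → CPoly n)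
    (CE : Set (Exp n) → SimpleGraph (Exp n) → SimpleGraph (Exp n))
    (I : Fin p → Set (Fin n)) (J : Fin p → Finset (Fin m)) (J' : Finset (Fin m))
    (d k : ℕ) : Set (Exp n × Exp n → ℂ) :=
  {y | IsHermSeq y ∧ y (0, 0) = 1 ∧
    (∀ l : Fin p, ∀ j ∈ Jext (J l),
      inProjPSD (d - dje g j) (I l) (cstsFam f g CE I J d k l j)
        (Matrix.hadamard (adjB (d - dje g j) (I l) (cstsFam f g CE I J d k l j))
          (locMat (gext g j) (d - dje g j) (I l) y))) ∧
    (∀ j ∈ J', 0 ≤ (Lc (g j) y).re)}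

/-- `ρ^cs-ts_{d,k}`, the optimum of `(Q^cs-ts_{d,k})`. -/
def cstsOpt {n m p : ℕ} (f : CPoly n) (g : Fin m → CPoly n)
    (CE : Set (Exp n) → SimpleGraph (Exp n) → SimpleGraph (Exp n))
    (I : Fin p → Set (Fin n)) (J : Fin p → Finset (Fin m)) (J' : Finset (Fin m))
    (d k : ℕ) : EReal :=
  sInf ((fun y => ((Lc f y).re : EReal)) '' cstsFeas f g CE I J J' d k)


lemma degSet_mono {n : ℕ} {d d' : ℕ} (h : d ≤ d') : degSet n d ⊆ degSet n d' :=
  fun _ hβ => le_trans hβ h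

lemma tspGraph_mono {n : ℕ} (A : Set (Exp n × Exp n)) {V V' : Set (Exp n)} (h : V ⊆ V') :
    tspGraph A V ≤ tspGraph A V' := by
  intro a b hab
  rcases hab with ⟨hne, hc⟩
  refine ⟨hne, ?_⟩
  rcases hc with ⟨h1, h2, h3⟩ | ⟨h1, h2, h3⟩
  · exact Or.inl ⟨h h1, h h2, h3⟩
  · exact Or.inr ⟨h h1, h h2, h3⟩

lemma gSupp_mono {n : ℕ} (g : CPoly n) {V V' : Set (Exp n)} {G G' : SimpleGraph (Exp n)}
    (hV : V ⊆ V') (hG : G ≤ G') : gSupp g V G ⊆ gSupp g V' G' := by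
  rintro q ⟨β, γ, p, hc, hp, hq⟩
  exact ⟨β, γ, p, hc.imp (fun ⟨he, hv⟩ => ⟨he, hV hv⟩) (fun h => hG h), hp, hq⟩

lemma Fstep_mono {n : ℕ} (g : CPoly n) {V V' : Set (Exp n)} {C C' : Set (Exp n × Exp n)}
    (hV : V ⊆ V') (hC : C ⊆ C') : Fstep g V C ≤ Fstep g V' C' := by
  rintro a b ⟨hne, hc⟩
  refine ⟨hne, ?_⟩
  rcases hc with ⟨h1, h2, p, hp, hm⟩ | ⟨h1, h2, p, hp, hm⟩
  · exact Or.inl ⟨hV h1, hV h2, p, hp, hC hm⟩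
  · exact Or.inr ⟨hV h1, hV h2, p, hp, hC hm⟩

lemma tsC_mono {n m : ℕ} (g : Fin m → CPoly n) {d d' : ℕ}
    {GG GG' : Fin (m + 1) → SimpleGraph (Exp n)} (hd : d ≤ d')
    (hGG : ∀ i, GG i ≤ GG' i) : tsC g d GG ⊆ tsC g d' GG' := by
  intro q hq
  rcases Set.mem_iUnion.mp hq with ⟨i, hi⟩
  exact Set.mem_iUnion.mpr ⟨i,
    gSupp_mono _ (degSet_mono (Nat.sub_le_sub_right hd _)) (hGG i) hi⟩

lemma tsFam_mono_aux {n m : ℕ} (f : CPoly n) (g : Fin m → CPoly n)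
    (CE : Set (Exp n) → SimpleGraph (Exp n) → SimpleGraph (Exp n))
    (hCE_mono : ∀ (V₁ V₂ : Set (Exp n)) (G₁ G₂ : SimpleGraph (Exp n)),
      V₁ ⊆ V₂ → G₁ ≤ G₂ → CE V₁ G₁ ≤ CE V₂ G₂) (d : ℕ) :
    ∀ k : ℕ, ∀ j : Fin (m + 1), tsFam f g CE d k j ≤ tsFam f g CE (d + 1) k j := by
  intro k
  induction k with
  | zero =>
      intro j
      by_cases hj : j = 0
      · simp only [tsFam, if_pos hj]
        exact tspGraph_mono _ (degSet_mono (Nat.le_succ d))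
      · simp only [tsFam, if_neg hj]; exact le_refl _
  | succ k ih =>
      intro j
      show CE _ _ ≤ CE _ _
      exact hCE_mono _ _ _ _ (degSet_mono (Nat.sub_le_sub_right (Nat.le_succ d) _))
        (Fstep_mono _ (degSet_mono (Nat.sub_le_sub_right (Nat.le_succ d) _))
          (tsC_mono g (Nat.le_succ d) (fun i => ih i)))

/-- **Theorem (term-sparsity graphs grow with the relaxation order).**
For all `d ≥ d_min`, `k ≥ 1` and `j ∈ {0,1,…,m}`, the graph `G^(k)_(d,j)` is a subgraph of
`G^(k)_(d+1,j)`. -/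
theorem tsFam_mono_relaxation_order {n m : ℕ} (f : CPoly n) (g : Fin m → CPoly n)
    (CE : Set (Exp n) → SimpleGraph (Exp n) → SimpleGraph (Exp n))
    (hCE_le : ∀ (V : Set (Exp n)) (G : SimpleGraph (Exp n)), G ≤ CE V G)
    (hCE_chordal : ∀ (V : Set (Exp n)) (G : SimpleGraph (Exp n)), IsChordal (CE V G))
    (hCE_supp : ∀ (V : Set (Exp n)) (G : SimpleGraph (Exp n)),
      (∀ a b, G.Adj a b → a ∈ V ∧ b ∈ V) → ∀ a b, (CE V G).Adj a b → a ∈ V ∧ b ∈ V)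
    (hCE_mono : ∀ (V₁ V₂ : Set (Exp n)) (G₁ G₂ : SimpleGraph (Exp n)),
      V₁ ⊆ V₂ → G₁ ≤ G₂ → CE V₁ G₁ ≤ CE V₂ G₂) :
    ∀ d : ℕ, dminOrd f g ≤ d → ∀ k : ℕ, 1 ≤ k → ∀ j : Fin (m + 1),
      tsFam f g CE d k j ≤ tsFam f g CE (d + 1) k j := by
  intro d _ k _ j
  exact tsFam_mono_aux f g CE hCE_mono d k j

end
end

section
/- If the CPOP is a quadratically constrained quadratic program (i.e., f and all g_j have degree at most 2, so d_min = 1), then the term-sparsity-adapted complex moment relaxation at relaxation order 1 and sparse order 1, (Q^ts_{1,1}), and the dense first-order complex moment relaxation (Q_1) have the same optimum: ρ^ts_{1,1} = ρ_1. -/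
open scoped BigOperators ComplexOrder

attribute [local instance] Classical.propDecidable

noncomputable section

/-!
Every feasible point of `(Q_1)` is feasible for `(Q^ts_{1,1})`. Conversely, the sparse constraint
for `g_0 = 1` provides a PSD matrix `Q` that agrees with `M_1(y)` on the diagonal and on the edges
of `G^(1)_{1,0}`, which contain every edge `{β, γ}` with `(β, γ) ∈ 𝒜`. Overwriting the entries of
`y` indexed by `ℕ^n_1 × ℕ^n_1` with those of `Q` gives a sequence `y'` with `M_1(y') = Q ⪰ 0` that
agrees with `y` on `𝒜`, so `L_{y'}(f) = L_y(f)`. The localizing constraints of `(Q_1)` hold for `y'`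
too: if `d_j ≥ 1`, then `M_{1-d_j}(g_j y')` is the `1 × 1` matrix `L_{y'}(g_j) = L_y(g_j)` (the order
`1 - d_j` truncates to `0`), which the sparse constraint already makes nonnegative; if `d_j = 0`,
then `g_j` is a constant `c`, the localizing matrix is `c • Q`, and `c ≥ 0` is the `(0, 0)` entry
of the sparse constraint.
-/

namespace CPoly

variable {n : ℕ}

lemma one_coeff_zero : (one n).coeff (0, 0) = 1 := if_pos rfl

lemma zero_mem_supp_one : ((0, 0) : Exp n × Exp n) ∈ (one n).supp := by
  simp [supp, one_coeff_zero]

lemma supp_one_subset : (one n).supp ⊆ {(0, 0)} := fun _ hp => by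
  by_contra h
  exact hp (if_neg h)

lemma le_deg_of_mem_supp {g : CPoly n} {p : Exp n × Exp n} (hp : p ∈ g.supp) :
    (∑ i, p.1 i) + ∑ i, p.2 i ≤ g.deg :=
  le_csSup (g.finite_support.image _).bddAbove ⟨p, hp, rfl⟩

lemma supp_subset_zero_of_halfDeg_eq_zero {g : CPoly n} (h : g.halfDeg = 0) :
    g.supp ⊆ {(0, 0)} := by
  intro p hp
  have hdeg := g.le_deg_of_mem_supp hp
  have hg : g.deg = 0 := by unfold halfDeg at h; omega
  have h1 : ∑ i, p.1 i = 0 := by omega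
  have h2 : ∑ i, p.2 i = 0 := by omega
  exact Prod.ext (funext fun i => Finset.sum_eq_zero_iff.mp h1 i (Finset.mem_univ i))
    (funext fun i => Finset.sum_eq_zero_iff.mp h2 i (Finset.mem_univ i))

end CPoly

namespace MIdx

variable {n : ℕ} {S : Set (Fin n)}

def zero (d : ℕ) (S : Set (Fin n)) : MIdx n d S :=
  ⟨0, by simp, fun _ hi => absurd rfl hi⟩

lemma val_eq_zero (β : MIdx n 0 S) : β.1 = 0 :=
  funext fun i => Finset.sum_eq_zero_iff.mp (Nat.le_zero.mp β.2.1) i (Finset.mem_univ i)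

instance : Subsingleton (MIdx n 0 S) :=
  ⟨fun β γ => Subtype.ext ((val_eq_zero β).trans (val_eq_zero γ).symm)⟩

end MIdx

section Pattern

variable {n d : ℕ} {S : Set (Fin n)} {G : SimpleGraph (Exp n)}
  {M : Matrix (MIdx n d S) (MIdx n d S) ℂ}

lemma inProjPSD_hadamard_adjB (hM : M.PosSemidef) :
    inProjPSD d S G (Matrix.hadamard (adjB d S G) M) :=
  ⟨M, hM, by funext β γ; by_cases h : β = γ ∨ G.Adj β.1 γ.1 <;> simp [adjB, h]⟩

lemma inProjPSD.exists_posSemidef_eqOn (h : inProjPSD d S G (Matrix.hadamard (adjB d S G) M)) :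
    ∃ Q : Matrix (MIdx n d S) (MIdx n d S) ℂ, Q.PosSemidef ∧
      ∀ β γ, (β = γ ∨ G.Adj β.1 γ.1) → Q β γ = M β γ := by
  obtain ⟨Q, hQ, hQM⟩ := h
  exact ⟨Q, hQ, fun β γ hβγ => by simpa [adjB, hβγ] using congrFun (congrFun hQM β) γ⟩

lemma inProjPSD.diag_nonneg (h : inProjPSD d S G (Matrix.hadamard (adjB d S G) M))
    (β : MIdx n d S) : 0 ≤ M β β := by
  obtain ⟨Q, hQ, hQM⟩ := h.exists_posSemidef_eqOn
  rw [← hQM β β (Or.inl rfl)]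
  exact hQ.diag_nonneg

lemma inProjPSD.posSemidef [Subsingleton (MIdx n d S)]
    (h : inProjPSD d S G (Matrix.hadamard (adjB d S G) M)) : M.PosSemidef := by
  obtain ⟨Q, hQ, hQM⟩ := h.exists_posSemidef_eqOn
  have hQeq : Q = M := by
    ext β γ
    rw [Subsingleton.elim β γ]
    exact hQM γ γ (Or.inl rfl)
  exact hQeq ▸ hQ

end Pattern

section Sequences

variable {n d : ℕ} {S : Set (Fin n)} {y y' : Exp n × Exp n → ℂ}

lemma Lc_congr {f : CPoly n} (h : Set.EqOn y y' f.supp) : Lc f y = Lc f y' :=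
  finsum_congr fun p => by
    by_cases hp : f.coeff p = 0
    · simp [hp]
    · rw [h hp]

lemma locMat_zero_congr {g : CPoly n} (h : Set.EqOn y y' g.supp) :
    locMat g 0 S y = locMat g 0 S y' := by
  funext β γ
  refine finsum_congr fun p => ?_
  by_cases hp : g.coeff p = 0
  · simp [hp]
  · simp only [MIdx.val_eq_zero, zero_add, Prod.mk.eta, h hp]

lemma locMat_eq_smul_momMat {g : CPoly n} (hg : g.supp ⊆ {(0, 0)}) :
    locMat g d S y = g.coeff (0, 0) • momMat d S y := by
  funext β γ
  have hzero : ∀ p ≠ ((0, 0) : Exp n × Exp n), g.coeff p * y (β.1 + p.1, γ.1 + p.2) = 0 :=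
    fun p hp => by
      rw [show g.coeff p = 0 from by_contra fun h => hp (hg h), zero_mul]
  simp [locMat, momMat, finsum_eq_single _ _ hzero]

lemma locMat_one : locMat (CPoly.one n) d S y = momMat d S y := by
  rw [locMat_eq_smul_momMat CPoly.supp_one_subset, CPoly.one_coeff_zero, one_smul]

def completeSeq (Q : Matrix (MIdx n d S) (MIdx n d S) ℂ) (y : Exp n × Exp n → ℂ) :
    Exp n × Exp n → ℂ :=
  fun p => if h : p.1 ∈ degSetI d S ∧ p.2 ∈ degSetI d S then Q ⟨p.1, h.1⟩ ⟨p.2, h.2⟩ else y p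

variable {Q : Matrix (MIdx n d S) (MIdx n d S) ℂ}

lemma momMat_completeSeq : momMat d S (completeSeq Q y) = Q :=
  funext fun β => funext fun γ => dif_pos ⟨β.2, γ.2⟩

lemma isHermSeq_completeSeq (hQ : Q.IsHermitian) (hy : IsHermSeq y) :
    IsHermSeq (completeSeq Q y) := by
  intro p
  by_cases h : p.1 ∈ degSetI d S ∧ p.2 ∈ degSetI d S
  · simp only [completeSeq, dif_pos h, dif_pos (And.symm h)]
    exact (hQ.apply _ _).symm
  · simp only [completeSeq, dif_neg h, dif_neg (mt And.symm h)]
    exact hy p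

lemma completeSeq_eqOn {P : Set (Exp n × Exp n)}
    (hQ : ∀ β γ : MIdx n d S, (β.1, γ.1) ∈ P → Q β γ = y (β.1, γ.1)) :
    Set.EqOn (completeSeq Q y) y P := by
  intro p hp
  by_cases h : p.1 ∈ degSetI d S ∧ p.2 ∈ degSetI d S
  · simp only [completeSeq, dif_pos h]
    exact hQ ⟨p.1, h.1⟩ ⟨p.2, h.2⟩ hp
  · exact dif_neg h

end Sequences

section Relaxations

variable {n m : ℕ} {f : CPoly n} {g : Fin m → CPoly n}
  {CE : Set (Exp n) → SimpleGraph (Exp n) → SimpleGraph (Exp n)}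

lemma supp_subset_suppA (j : Fin m) : (g j).supp ⊆ suppA f g :=
  Set.subset_union_of_subset_right (Set.subset_iUnion (fun j => (g j).supp) j) _

lemma tspGraph_adj_mem {A : Set (Exp n × Exp n)} {V : Set (Exp n)} {β γ : Exp n}
    (h : (tspGraph A V).Adj β γ) : β ∈ V ∧ γ ∈ V := by
  rw [tspGraph, SimpleGraph.fromRel_adj] at h
  rcases h.2 with ⟨hβ, hγ, -⟩ | ⟨hγ, hβ, -⟩ <;> exact ⟨hβ, hγ⟩

lemma mem_gSupp_one_of_adj {V : Set (Exp n)} {G : SimpleGraph (Exp n)} {β γ : Exp n}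
    (h : G.Adj β γ) : (β, γ) ∈ gSupp (CPoly.one n) V G :=
  ⟨β, γ, (0, 0), Or.inr h, CPoly.zero_mem_supp_one, by simp⟩

lemma le_Fstep_one {V : Set (Exp n)} {C : Set (Exp n × Exp n)} {G : SimpleGraph (Exp n)}
    (hV : ∀ β γ, G.Adj β γ → β ∈ V ∧ γ ∈ V) (hC : ∀ β γ, G.Adj β γ → (β, γ) ∈ C) :
    G ≤ Fstep (CPoly.one n) V C := by
  intro β γ h
  rw [Fstep, SimpleGraph.fromRel_adj]
  exact ⟨h.ne, Or.inl ⟨(hV β γ h).1, (hV β γ h).2, (0, 0), CPoly.zero_mem_supp_one,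
    by simpa using hC β γ h⟩⟩

lemma tsFam_zero_zero (d : ℕ) : tsFam f g CE d 0 0 = tspGraph (suppA f g) (degSet n d) :=
  if_pos rfl

lemma tspGraph_le_tsFam_one_zero (hCE_le : ∀ V G, G ≤ CE V G) (d : ℕ) :
    tspGraph (suppA f g) (degSet n d) ≤ tsFam f g CE d 1 0 := by
  refine (le_Fstep_one (fun _ _ => tspGraph_adj_mem) fun β γ h => ?_).trans (hCE_le _ _)
  refine Set.mem_iUnion.mpr ⟨0, ?_⟩
  rw [tsFam_zero_zero]
  exact mem_gSupp_one_of_adj h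

lemma denseFeas_subset_tsFeas (d k : ℕ) : denseFeas f g d ⊆ tsFeas f g CE d k := by
  rintro y ⟨hherm, h1, hmom, hloc⟩
  refine ⟨hherm, h1, fun j => ?_⟩
  induction j using Fin.cases with
  | zero =>
    exact inProjPSD_hadamard_adjB (M := locMat (CPoly.one n) d Set.univ y) (by rwa [locMat_one])
  | succ j => exact inProjPSD_hadamard_adjB (hloc j)

lemma exists_posSemidef_eqOn_momMat (hCE_le : ∀ V G, G ≤ CE V G) {y : Exp n × Exp n → ℂ}
    (hy : y ∈ tsFeas f g CE 1 1) :
    ∃ Q : Matrix (MIdx n 1 Set.univ) (MIdx n 1 Set.univ) ℂ, Q.PosSemidef ∧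
      ∀ β γ : MIdx n 1 Set.univ, (β.1, γ.1) ∈ insert (0, 0) (suppA f g) →
        Q β γ = y (β.1, γ.1) := by
  have h0 : inProjPSD 1 Set.univ (tsFam f g CE 1 1 0)
      (Matrix.hadamard (adjB 1 Set.univ (tsFam f g CE 1 1 0)) (momMat 1 Set.univ y)) := by
    rw [← locMat_one]
    exact hy.2.2 0
  obtain ⟨Q, hQ, hQy⟩ := h0.exists_posSemidef_eqOn
  refine ⟨Q, hQ, fun β γ hp => hQy β γ ?_⟩
  by_cases hβγ : β = γ
  · exact Or.inl hβγ
  have hne : β.1 ≠ γ.1 := fun h => hβγ (Subtype.ext h)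
  have hA : (β.1, γ.1) ∈ suppA f g := hp.resolve_left fun h => hne <| by
    simp only [Prod.mk.injEq] at h
    rw [h.1, h.2]
  refine Or.inr (tspGraph_le_tsFam_one_zero hCE_le 1 ?_)
  rw [tspGraph, SimpleGraph.fromRel_adj]
  exact ⟨hne, Or.inl ⟨β.2.1, γ.2.1, hA⟩⟩

lemma posSemidef_locMat_of_inProjPSD {S : Set (Fin n)} {g : CPoly n} {G : SimpleGraph (Exp n)}
    {y y' : Exp n × Exp n → ℂ}
    (h : inProjPSD (1 - g.halfDeg) S G
      (Matrix.hadamard (adjB (1 - g.halfDeg) S G) (locMat g (1 - g.halfDeg) S y)))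
    (hy : y (0, 0) = 1) (hmom : (momMat 1 S y').PosSemidef) (hagree : Set.EqOn y' y g.supp) :
    (locMat g (1 - g.halfDeg) S y').PosSemidef := by
  rcases Nat.eq_zero_or_pos g.halfDeg with h0 | hpos
  · have hg := g.supp_subset_zero_of_halfDeg_eq_zero h0
    rw [h0, Nat.sub_zero] at h ⊢
    have hc := h.diag_nonneg (MIdx.zero 1 S)
    rw [locMat_eq_smul_momMat hg, Matrix.smul_apply,
      show momMat 1 S y (MIdx.zero 1 S) (MIdx.zero 1 S) = 1 from hy, smul_eq_mul, mul_one] at hc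
    rw [locMat_eq_smul_momMat hg]
    exact hmom.smul hc
  · rw [show 1 - g.halfDeg = 0 by omega] at h ⊢
    rw [locMat_zero_congr hagree]
    exact h.posSemidef

lemma exists_mem_denseFeas_eqOn_suppA (hCE_le : ∀ V G, G ≤ CE V G) {y : Exp n × Exp n → ℂ}
    (hy : y ∈ tsFeas f g CE 1 1) : ∃ y' ∈ denseFeas f g 1, Set.EqOn y' y (suppA f g) := by
  obtain ⟨Q, hQ, hQy⟩ := exists_posSemidef_eqOn_momMat hCE_le hy
  obtain ⟨hherm, h1, hcons⟩ := hy
  have hagree := completeSeq_eqOn hQy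
  have hmom : (momMat 1 Set.univ (completeSeq Q y)).PosSemidef := by
    rwa [momMat_completeSeq]
  refine ⟨completeSeq Q y, ⟨isHermSeq_completeSeq hQ.1 hherm,
    (hagree (Set.mem_insert _ _)).trans h1, hmom, fun j => ?_⟩,
    hagree.mono (Set.subset_insert _ _)⟩
  exact posSemidef_locMat_of_inProjPSD (g := g j) (hcons j.succ) h1 hmom
    (hagree.mono ((supp_subset_suppA j).trans (Set.subset_insert _ _)))

end Relaxations

theorem ts_first_order_eq_dense_general {n m : ℕ} (f : CPoly n) (g : Fin m → CPoly n)
    (CE : Set (Exp n) → SimpleGraph (Exp n) → SimpleGraph (Exp n))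
    (hCE_le : ∀ (V : Set (Exp n)) (G : SimpleGraph (Exp n)), G ≤ CE V G) :
    tsOpt f g CE 1 1 = denseOpt f g 1 := by
  have himage : (fun y => ((Lc f y).re : EReal)) '' tsFeas f g CE 1 1
      = (fun y => ((Lc f y).re : EReal)) '' denseFeas f g 1 := by
    refine Set.Subset.antisymm ?_ (Set.image_mono (denseFeas_subset_tsFeas 1 1))
    rintro _ ⟨y, hy, rfl⟩
    obtain ⟨y', hy', hagree⟩ := exists_mem_denseFeas_eqOn_suppA hCE_le hy
    exact ⟨y', hy', by simp only [Lc_congr (hagree.mono Set.subset_union_left)]⟩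
  exact congrArg sInf himage

/-- **Proposition (QCQP: TSSOS relaxation at `(d,k) = (1,1)` is exact w.r.t. the dense
first-order relaxation).** If the CPOP is a QCQP (all degrees at most `2`, so `d_min = 1`),
then `ρ^ts_(1,1) = ρ_1`. -/
theorem ts_first_order_eq_dense {n m : ℕ} (f : CPoly n) (g : Fin m → CPoly n)
    (hf2 : f.deg ≤ 2) (hg2 : ∀ j : Fin m, (g j).deg ≤ 2) (hdmin : dminOrd f g = 1)
    (CE : Set (Exp n) → SimpleGraph (Exp n) → SimpleGraph (Exp n))
    (hCE_le : ∀ (V : Set (Exp n)) (G : SimpleGraph (Exp n)), G ≤ CE V G)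
    (hCE_chordal : ∀ (V : Set (Exp n)) (G : SimpleGraph (Exp n)), IsChordal (CE V G))
    (hCE_supp : ∀ (V : Set (Exp n)) (G : SimpleGraph (Exp n)),
      (∀ a b, G.Adj a b → a ∈ V ∧ b ∈ V) → ∀ a b, (CE V G).Adj a b → a ∈ V ∧ b ∈ V) :
    tsOpt f g CE 1 1 = denseOpt f g 1 :=
  ts_first_order_eq_dense_general f g CE hCE_le
end
end
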